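/- arXiv:2011.11463 — 3 statements merged into one kernel-verified Lean document; each statement's English description precedes it below -/
import Mathlib

section
/- For any schedule d, define x_k(t) = 1 if d(t) = k and 0 otherwise, and z_{i,j}(t) = 1 if 1_{i,d(τ)}(τ) = 0 for every τ ∈ {j,…,t} and 0 otherwise. Then (x,z) is a feasible solution of the primal LP (i.e., x_k(t) ≥ 0, z_{i,j}(t) ≥ 0, and z_{i,j}(t) + Σ_{τ=j}^t Σ_{k=1}^M 1_{i,k}(τ) x_k(τ) ≥ 1 for all i and all 1 ≤ j ≤ t ≤ T), and its primal objective value equals the total cost J(s,d). -/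
open scoped Classical

noncomputable section

/-- Age of information of user `i` under schedule `d`. -/
def age (ind : ℕ → ℕ → ℕ → ℝ) (d : ℕ → ℕ) (i : ℕ) : ℕ → ℕ
  | 0 => 0
  | t + 1 => if ind i (d (t + 1)) (t + 1) = 1 then 0 else age ind d i t + 1

lemma age_sum_eq (ind : ℕ → ℕ → ℕ → ℝ)
    (hind01 : ∀ i k t, ind i k t = 0 ∨ ind i k t = 1)
    (d : ℕ → ℕ) (i : ℕ) : ∀ t : ℕ,
    ∑ j ∈ Finset.Icc 1 t,
      (if ∀ τ ∈ Finset.Icc j t, ind i (d τ) τ = 0 then (1 : ℝ) else 0)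
      = (age ind d i t : ℝ)
  | 0 => by simp [age]
  | t + 1 => by
    by_cases h : ind i (d (t + 1)) (t + 1) = 1
    · have hz : ∀ j ∈ Finset.Icc 1 (t + 1),
          ¬ (∀ τ ∈ Finset.Icc j (t + 1), ind i (d τ) τ = 0) := by
        intro j hj hall
        have := hall (t + 1) (Finset.mem_Icc.mpr ⟨(Finset.mem_Icc.mp hj).2, le_refl _⟩)
        rw [this] at h; exact one_ne_zero h.symm
      have hage : (age ind d i (t + 1) : ℝ) = 0 := by simp [age, h]
      rw [hage]
      exact Finset.sum_eq_zero fun j hj => if_neg (hz j hj)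
    · have h0 : ind i (d (t + 1)) (t + 1) = 0 := (hind01 i (d (t + 1)) (t + 1)).resolve_right h
      have hsplit : Finset.Icc 1 (t + 1) = insert (t + 1) (Finset.Icc 1 t) := by
        ext x; simp only [Finset.mem_Icc, Finset.mem_insert]; omega
      rw [hsplit, Finset.sum_insert (by simp)]
      have hcond : ∀ τ ∈ Finset.Icc (t + 1) (t + 1), ind i (d τ) τ = 0 := by
        intro τ hτ
        have : τ = t + 1 := by simpa using hτ
        rw [this]; exact h0
      have hiff : ∀ j ∈ Finset.Icc 1 t,
          ((∀ τ ∈ Finset.Icc j (t + 1), ind i (d τ) τ = 0)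
            ↔ (∀ τ ∈ Finset.Icc j t, ind i (d τ) τ = 0)) := by
        intro j hj
        constructor
        · intro hall τ hτ
          exact hall τ (Finset.mem_Icc.mpr ⟨(Finset.mem_Icc.mp hτ).1,
            le_trans (Finset.mem_Icc.mp hτ).2 (Nat.le_succ t)⟩)
        · intro hall τ hτ
          rcases Finset.mem_Icc.mp hτ with ⟨h1, h2⟩
          rcases Nat.lt_or_ge τ (t + 1) with hlt | hge
          · exact hall τ (Finset.mem_Icc.mpr ⟨h1, by omega⟩)
          · have : τ = t + 1 := by omega
            rw [this]; exact h0
      have hage : (age ind d i (t + 1) : ℝ) = (age ind d i t : ℝ) + 1 := by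
        simp [age, h]
      rw [if_pos hcond, hage, ← age_sum_eq ind hind01 d i t, add_comm]
      congr 1
      exact Finset.sum_congr rfl fun j hj => if_congr (hiff j hj) rfl rfl

/-- for any schedule `d`, setting `x_k(t) = 1` iff `d(t) = k` and
`z_{i,j}(t) = 1` iff `1_{i,d(τ)}(τ) = 0` for every `τ ∈ {j,…,t}`, the pair `(x, z)` is a
feasible solution of the primal LP and its objective value equals the total cost `J(s,d)`. -/
theorem stmt1 (N M T : ℕ) (hN : 1 ≤ N) (hM : 1 ≤ M) (hT : 1 ≤ T)
    (ind : ℕ → ℕ → ℕ → ℝ)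
    (hind01 : ∀ i k t, ind i k t = 0 ∨ ind i k t = 1)
    (hmono : ∀ i k k' t, k ≤ k' → ind i k t = 1 → ind i k' t = 1)
    (hcov : ∀ i t, ind i M t = 1)
    (hzero : ∀ i t, ind i 0 t = 0)
    (C : ℕ → ℝ) (hC0 : C 0 = 0) (hC1 : 1 ≤ C 1)
    (hCmono : ∀ k k', 1 ≤ k → k ≤ k' → k' ≤ M → C k ≤ C k')
    (d : ℕ → ℕ) (hd : ∀ t, d t ≤ M) :
    -- nonnegativity of x
    (∀ k t : ℕ, (0 : ℝ) ≤ if d t = k then 1 else 0) ∧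
    -- nonnegativity of z
    (∀ i j t : ℕ, (0 : ℝ) ≤ if ∀ τ ∈ Finset.Icc j t, ind i (d τ) τ = 0 then 1 else 0) ∧
    -- covering constraints
    (∀ i ∈ Finset.Icc 1 N, ∀ t ∈ Finset.Icc 1 T, ∀ j ∈ Finset.Icc 1 t,
      1 ≤ (if ∀ τ ∈ Finset.Icc j t, ind i (d τ) τ = 0 then (1 : ℝ) else 0)
          + ∑ τ ∈ Finset.Icc j t, ∑ k ∈ Finset.Icc 1 M,
              ind i k τ * (if d τ = k then 1 else 0)) ∧
    -- the primal objective value equals the total cost J(s,d)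
    (∑ t ∈ Finset.Icc 1 T,
        (∑ k ∈ Finset.Icc 1 M, C k * (if d t = k then (1 : ℝ) else 0)
          + (1 / N) * ∑ i ∈ Finset.Icc 1 N, ∑ j ∈ Finset.Icc 1 t,
              (if ∀ τ ∈ Finset.Icc j t, ind i (d τ) τ = 0 then (1 : ℝ) else 0))
      = ∑ t ∈ Finset.Icc 1 T,
          (C (d t) + (1 / N) * ∑ i ∈ Finset.Icc 1 N, (age ind d i t : ℝ))) := by
  refine ⟨fun k t => by positivity, fun i j t => by positivity, ?_, ?_⟩
  · intro i hi t ht j hj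
    by_cases hP : ∀ τ ∈ Finset.Icc j t, ind i (d τ) τ = 0
    · rw [if_pos hP]
      have : (0 : ℝ) ≤ ∑ τ ∈ Finset.Icc j t, ∑ k ∈ Finset.Icc 1 M,
          ind i k τ * (if d τ = k then 1 else 0) := by
        apply Finset.sum_nonneg; intro τ _
        apply Finset.sum_nonneg; intro k _
        rcases hind01 i k τ with h | h <;> simp only [h, zero_mul, one_mul] <;> positivity
      linarith
    · rw [if_neg hP]
      push_neg at hP
      obtain ⟨τ0, hτ0, hne⟩ := hP
      have h1 : ind i (d τ0) τ0 = 1 := (hind01 i (d τ0) τ0).resolve_left hne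
      have hd1 : 1 ≤ d τ0 := by
        by_contra h
        have : d τ0 = 0 := by omega
        rw [this, hzero] at h1; exact one_ne_zero h1.symm
      have hmem : d τ0 ∈ Finset.Icc 1 M := Finset.mem_Icc.mpr ⟨hd1, hd τ0⟩
      have hinner : (1 : ℝ) ≤ ∑ k ∈ Finset.Icc 1 M, ind i k τ0 * (if d τ0 = k then 1 else 0) := by
        have := Finset.single_le_sum (f := fun k => ind i k τ0 * (if d τ0 = k then (1 : ℝ) else 0))
          (fun k _ => by rcases hind01 i k τ0 with h | h <;> simp only [h, zero_mul, one_mul] <;> positivity) hmem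
        simpa [h1] using this
      have houter : ∑ k ∈ Finset.Icc 1 M, ind i k τ0 * (if d τ0 = k then (1 : ℝ) else 0)
          ≤ ∑ τ ∈ Finset.Icc j t, ∑ k ∈ Finset.Icc 1 M, ind i k τ * (if d τ = k then 1 else 0) := by
        apply Finset.single_le_sum
          (f := fun τ => ∑ k ∈ Finset.Icc 1 M, ind i k τ * (if d τ = k then (1 : ℝ) else 0))
          (fun τ _ => Finset.sum_nonneg fun k _ => by
            rcases hind01 i k τ with h | h <;> simp only [h, zero_mul, one_mul] <;> positivity) hτ0
      linarith
  · apply Finset.sum_congr rfl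
    intro t _
    have hC : ∑ k ∈ Finset.Icc 1 M, C k * (if d t = k then (1 : ℝ) else 0) = C (d t) := by
      by_cases h0 : d t = 0
      · rw [h0, hC0]
        apply Finset.sum_eq_zero
        intro k hk
        rw [if_neg (by rintro rfl; exact absurd (Finset.mem_Icc.mp hk).1 (by omega)), mul_zero]
      · have hmem : d t ∈ Finset.Icc 1 M := Finset.mem_Icc.mpr ⟨by omega, hd t⟩
        rw [Finset.sum_eq_single (d t)]
        · simp
        · intro k _ hk; rw [if_neg (fun h => hk h.symm), mul_zero]
        · intro h; exact absurd hmem h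
    rw [hC]
    congr 1
    congr 1
    apply Finset.sum_congr rfl
    intro i _
    exact age_sum_eq ind hind01 d i t

end
end

section
/- The optimal value of the primal LP is a lower bound on the offline optimum: the infimum of the primal LP objective over all feasible (x,z) is at most OPT(s), where OPT(s) = min over all schedules d of J(s,d). -/
open scoped Classical

noncomputable section

/-- Auxiliary `z` variable for a "service indicator" predicate `P`. -/
def zed (P : ℕ → Prop) (j t : ℕ) : ℝ := if ∃ τ ∈ Finset.Icc j t, P τ then 0 else 1

lemma zed_nonneg (P : ℕ → Prop) (j t : ℕ) : 0 ≤ zed P j t := by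
  unfold zed; split <;> norm_num

lemma zed_pos {P : ℕ → Prop} {j t : ℕ} (h : ∃ τ ∈ Finset.Icc j t, P τ) :
    zed P j t = 0 := if_pos h

lemma zed_neg {P : ℕ → Prop} {j t : ℕ} (h : ¬∃ τ ∈ Finset.Icc j t, P τ) :
    zed P j t = 1 := if_neg h

/-- The sum of the natural `z` variables over `j` equals the age. -/
lemma age_sum (ind : ℕ → ℕ → ℕ → ℝ) (d : ℕ → ℕ) (i : ℕ) (t : ℕ) :
    ∑ j ∈ Finset.Icc 1 t, zed (fun τ => ind i (d τ) τ = 1) j t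
      = (age ind d i t : ℝ) := by
  induction t with
  | zero => simp [age]
  | succ t ih =>
    by_cases h : ind i (d (t + 1)) (t + 1) = 1
    · have hall : ∀ j ∈ Finset.Icc 1 (t + 1),
          zed (fun τ => ind i (d τ) τ = 1) j (t + 1) = 0 := by
        intro j hj
        have hj' := Finset.mem_Icc.mp hj
        exact zed_pos ⟨t + 1, Finset.mem_Icc.mpr ⟨hj'.2, le_refl _⟩, h⟩
      rw [Finset.sum_eq_zero hall]
      simp [age, h]
    · rw [Finset.sum_Icc_succ_top (Nat.le_add_left 1 t)]
      have heq : ∀ j ∈ Finset.Icc 1 t,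
          zed (fun τ => ind i (d τ) τ = 1) j (t + 1)
            = zed (fun τ => ind i (d τ) τ = 1) j t := by
        intro j hj
        have hiff : (∃ τ ∈ Finset.Icc j (t + 1), ind i (d τ) τ = 1) ↔
            (∃ τ ∈ Finset.Icc j t, ind i (d τ) τ = 1) := by
          constructor
          · rintro ⟨τ, hτ, hτ1⟩
            have hτ' := Finset.mem_Icc.mp hτ
            rcases Nat.lt_or_ge τ (t + 1) with h' | h'
            · exact ⟨τ, Finset.mem_Icc.mpr ⟨hτ'.1, Nat.lt_succ_iff.mp h'⟩, hτ1⟩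
            · have : τ = t + 1 := le_antisymm hτ'.2 h'
              exact absurd (this ▸ hτ1) h
          · rintro ⟨τ, hτ, hτ1⟩
            have hτ' := Finset.mem_Icc.mp hτ
            exact ⟨τ, Finset.mem_Icc.mpr ⟨hτ'.1, le_trans hτ'.2 (Nat.le_succ t)⟩, hτ1⟩
        by_cases h' : ∃ τ ∈ Finset.Icc j t, ind i (d τ) τ = 1
        · rw [zed_pos (hiff.mpr h'), zed_pos h']
        · rw [zed_neg (fun hh => h' (hiff.mp hh)), zed_neg h']
      have hlast : zed (fun τ => ind i (d τ) τ = 1) (t + 1) (t + 1) = 1 := by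
        apply zed_neg
        rintro ⟨τ, hτ, hτ1⟩
        have hτ' := Finset.mem_Icc.mp hτ
        have : τ = t + 1 := le_antisymm hτ'.2 hτ'.1
        exact h (this ▸ hτ1)
      rw [Finset.sum_congr rfl heq, ih, hlast]
      simp [age, h]

/-- the optimal value of the primal LP (the infimum of its objective over all
feasible `(x, z)`) is at most `OPT(s)`, the minimum total cost over all schedules. -/
theorem stmt2 (N M T : ℕ) (hN : 1 ≤ N) (hM : 1 ≤ M) (hT : 1 ≤ T)
    (ind : ℕ → ℕ → ℕ → ℝ)
    (hind01 : ∀ i k t, ind i k t = 0 ∨ ind i k t = 1)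
    (hmono : ∀ i k k' t, k ≤ k' → ind i k t = 1 → ind i k' t = 1)
    (hcov : ∀ i t, ind i M t = 1)
    (hzero : ∀ i t, ind i 0 t = 0)
    (C : ℕ → ℝ) (hC0 : C 0 = 0) (hC1 : 1 ≤ C 1)
    (hCmono : ∀ k k', 1 ≤ k → k ≤ k' → k' ≤ M → C k ≤ C k') :
    sInf {v : ℝ | ∃ x : ℕ → ℕ → ℝ, ∃ z : ℕ → ℕ → ℕ → ℝ,
        (∀ k t : ℕ, 0 ≤ x k t) ∧ (∀ i j t : ℕ, 0 ≤ z i j t) ∧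
        (∀ i ∈ Finset.Icc 1 N, ∀ t ∈ Finset.Icc 1 T, ∀ j ∈ Finset.Icc 1 t,
          1 ≤ z i j t + ∑ τ ∈ Finset.Icc j t, ∑ k ∈ Finset.Icc 1 M, ind i k τ * x k τ) ∧
        v = ∑ t ∈ Finset.Icc 1 T,
              (∑ k ∈ Finset.Icc 1 M, C k * x k t
                + (1 / N) * ∑ i ∈ Finset.Icc 1 N, ∑ j ∈ Finset.Icc 1 t, z i j t)}
      ≤ sInf {c : ℝ | ∃ d : ℕ → ℕ, (∀ t, d t ≤ M) ∧
          c = ∑ t ∈ Finset.Icc 1 T,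
                (C (d t) + (1 / N) * ∑ i ∈ Finset.Icc 1 N, (age ind d i t : ℝ))} := by
  have hCnonneg : ∀ k, k ≤ M → 0 ≤ C k := by
    intro k hk
    rcases Nat.eq_zero_or_pos k with h | h
    · simp [h, hC0]
    · exact le_trans (by linarith) (hCmono 1 k le_rfl h hk)
  apply csInf_le_csInf
  · -- the LP value set is bounded below by 0
    refine ⟨0, ?_⟩
    rintro v ⟨x, z, hx, hz, -, rfl⟩
    apply Finset.sum_nonneg
    intro t ht
    apply add_nonneg
    · apply Finset.sum_nonneg
      intro k hk
      have hk' := Finset.mem_Icc.mp hk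
      exact mul_nonneg (hCnonneg k hk'.2) (hx k t)
    · apply mul_nonneg (by positivity)
      apply Finset.sum_nonneg
      intro i _
      exact Finset.sum_nonneg fun j _ => hz i j t
  · -- the schedule set is nonempty
    exact ⟨_, ⟨fun _ => M, fun _ => le_rfl, rfl⟩⟩
  · -- each schedule value is attained by a feasible LP point
    rintro c ⟨d, hd, rfl⟩
    have hcost : ∀ t : ℕ, ∑ k ∈ Finset.Icc 1 M,
        C k * (if d t = k then (1 : ℝ) else 0) = C (d t) := by
      intro t
      simp only [mul_ite, mul_one, mul_zero]
      rw [Finset.sum_ite_eq]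
      by_cases h : d t ∈ Finset.Icc 1 M
      · rw [if_pos h]
      · rw [if_neg h]
        have h0 : d t = 0 := by
          have h1 := hd t
          have h2 := Finset.mem_Icc.not.mp h
          omega
        rw [h0, hC0]
    refine ⟨fun k t => if d t = k then 1 else 0,
            fun i j t => zed (fun τ => ind i (d τ) τ = 1) j t,
            ?_, ?_, ?_, ?_⟩
    · intro k t; dsimp only; split <;> norm_num
    · intro i j t; exact zed_nonneg _ j t
    · -- feasibility
      intro i hi t ht j hj
      dsimp only
      have hinner : ∀ τ : ℕ, ∑ k ∈ Finset.Icc 1 M,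
          ind i k τ * (if d τ = k then (1 : ℝ) else 0) = ind i (d τ) τ := by
        intro τ
        simp only [mul_ite, mul_one, mul_zero]
        rw [Finset.sum_ite_eq]
        by_cases h : d τ ∈ Finset.Icc 1 M
        · rw [if_pos h]
        · rw [if_neg h]
          have h0 : d τ = 0 := by
            have h1 := hd τ
            have h2 := Finset.mem_Icc.not.mp h
            omega
          rw [h0, hzero]
      rw [Finset.sum_congr rfl fun τ _ => hinner τ]
      by_cases h : ∃ τ ∈ Finset.Icc j t, ind i (d τ) τ = 1
      · rw [zed_pos h]
        obtain ⟨τ, hτ, hτ1⟩ := h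
        have hge : (1 : ℝ) ≤ ∑ τ ∈ Finset.Icc j t, ind i (d τ) τ := by
          calc (1 : ℝ) = ind i (d τ) τ := hτ1.symm
          _ ≤ ∑ τ ∈ Finset.Icc j t, ind i (d τ) τ := by
              apply Finset.single_le_sum (f := fun τ => ind i (d τ) τ) _ hτ
              intro τ' _
              rcases hind01 i (d τ') τ' with h' | h' <;> simp [h']
        linarith
      · rw [zed_neg h]
        have hge : (0 : ℝ) ≤ ∑ τ ∈ Finset.Icc j t, ind i (d τ) τ := by
          apply Finset.sum_nonneg
          intro τ' _
          rcases hind01 i (d τ') τ' with h' | h' <;> simp [h']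
        linarith
    · -- same objective value
      apply Finset.sum_congr rfl
      intro t ht
      rw [hcost t]
      congr 1
      congr 1
      apply Finset.sum_congr rfl
      intro i _
      exact (age_sum ind d i t).symm

end
end

section
/- Primal feasibility of the primal–dual algorithm (first part of the Lemma): the values x_k(t) and z_{i,j}(t) produced by Alg. 1 at the end of slot T satisfy x_k(t) ≥ 0, z_{i,j}(t) ≥ 0, and z_{i,j}(t) + Σ_{τ=j}^t Σ_{k=1}^M 1_{i,k}(τ) x_k(τ) ≥ 1 for every i ∈ {1,…,N} and all 1 ≤ j ≤ t ≤ T. -/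
open scoped Classical
open MeasureTheory

noncomputable section

/-- Inner loop of Alg. 1 at a fixed slot: `innerLoop Ck θ ps j` is the value of the current
slot's `x`-variable after processing iterations `1, …, j`, where `ps j` is the (final)
contribution `Σ_{τ=j}^{t-1} x_{k*_τ}(τ)` of the earlier slots.  At iteration `j` the current
value of `Σ_{τ=j}^{t} x_{k*_τ}(τ)` is `ps j + innerLoop Ck θ ps (j-1)`; if it is `< 1`, the
`x`-variable is increased by `(1/Ck) Σ_{τ=j}^{t} x_{k*_τ}(τ) + 1/(θ·Ck)`. -/
def innerLoop (Ck θ : ℝ) (ps : ℕ → ℝ) : ℕ → ℝ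
  | 0 => 0
  | j + 1 =>
      if ps (j + 1) + innerLoop Ck θ ps j < 1 then
        innerLoop Ck θ ps j + (ps (j + 1) + innerLoop Ck θ ps j) / Ck + 1 / (θ * Ck)
      else innerLoop Ck θ ps j

/-- `xvec Ck θ t τ` : the value of `x_{k*_τ}(τ)` after Alg. 1 has processed slots `1, …, t`
(`Ck τ` stands for the cost `C_{k*_τ}` used in slot `τ`). -/
def xvec (Ck : ℕ → ℝ) (θ : ℝ) : ℕ → ℕ → ℝ
  | 0, _ => 0
  | t + 1, τ =>
      if τ = t + 1 then
        innerLoop (Ck (t + 1)) θ (fun j => ∑ σ ∈ Finset.Ico j (t + 1), xvec Ck θ t σ) (t + 1)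
      else xvec Ck θ t τ

/-- Final value of `x_{k*_t}(t)` computed by Alg. 1. -/
def xval (Ck : ℕ → ℝ) (θ : ℝ) (t : ℕ) : ℝ := xvec Ck θ t t

/-- `psFun Ck θ t j = Σ_{σ=j}^{t-1} x_{k*_σ}(σ)` (final values of the slots before `t`). -/
def psFun (Ck : ℕ → ℝ) (θ : ℝ) (t : ℕ) (j : ℕ) : ℝ :=
  ∑ σ ∈ Finset.Ico j t, xvec Ck θ (t - 1) σ

/-- The update condition of Alg. 1 at iteration `j` of slot `t`: the current value of
`Σ_{τ=j}^{t} x_{k*_τ}(τ)` (earlier slots final, slot `t` after iterations `1,…,j-1`) is `< 1`. -/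
def algCond (Ck : ℕ → ℝ) (θ : ℝ) (t j : ℕ) : Prop :=
  psFun Ck θ t j + innerLoop (Ck t) θ (psFun Ck θ t) (j - 1) < 1

/-- Final value of `z_{i,j}(t)` computed by Alg. 1 (it is the same for every user `i`). -/
def zval (Ck : ℕ → ℝ) (θ : ℝ) (j t : ℕ) : ℝ :=
  if algCond Ck θ t j then
    1 - (psFun Ck θ t j + innerLoop (Ck t) θ (psFun Ck θ t) (j - 1))
  else 0

/-- Final value of `y_{i,j}(t)` computed by Alg. 1 (it is the same for every user `i`). -/
def yval (Ck : ℕ → ℝ) (θ : ℝ) (N : ℕ) (j t : ℕ) : ℝ :=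
  if algCond Ck θ t j then 1 / N else 0

/-- `k*_t`: the minimum power level `k ≥ 1` with `1_{i,k}(t) = 1` for every user `i`. -/
def kstar (ind : ℕ → ℕ → ℕ → ℝ) (N : ℕ) (t : ℕ) : ℕ :=
  sInf {k : ℕ | 1 ≤ k ∧ ∀ i ∈ Finset.Icc 1 N, ind i k t = 1}

/-- `X(t) = Σ_{τ=1}^t min{x_{k*_τ}(τ), 1}`, used by Alg. 2 (so `X(0) = 0`). -/
def bigX (Ck : ℕ → ℝ) (θ : ℝ) (t : ℕ) : ℝ :=
  ∑ τ ∈ Finset.Icc 1 t, min (xval Ck θ τ) 1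

/-- Alg. 2 transmits in slot `t` for randomness `u` iff `u + k ∈ [X(t-1), X(t))` for some
integer `k ≥ 0`. -/
def transmits (Ck : ℕ → ℝ) (θ : ℝ) (u : ℝ) (t : ℕ) : Prop :=
  ∃ k : ℕ, bigX Ck θ (t - 1) ≤ u + k ∧ u + k < bigX Ck θ t

/-- The decision of Alg. 2 in slot `t` for randomness `u`: transmit with power `k*_t`, or idle. -/
def dAlg (ind : ℕ → ℕ → ℕ → ℝ) (N : ℕ) (Ck : ℕ → ℝ) (θ : ℝ) (u : ℝ) (t : ℕ) : ℕ :=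
  if transmits Ck θ u t then kstar ind N t else 0

/-- The constant `θ = (1 + 1/C_M)^⌊C_1⌋ − 1` of Alg. 1. -/
def thetaOf (C : ℕ → ℝ) (M : ℕ) : ℝ := (1 + 1 / C M) ^ ⌊C 1⌋ - 1

lemma innerLoop_nonneg {Ck θ : ℝ} {ps : ℕ → ℝ} (hC : 0 < Ck) (hθ : 0 < θ)
    (hps : ∀ j, 0 ≤ ps j) : ∀ n, 0 ≤ innerLoop Ck θ ps n := by
  intro n
  induction n with
  | zero => simp [innerLoop]
  | succ n ih =>
    simp only [innerLoop]
    split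
    · have h1 : 0 ≤ (ps (n + 1) + innerLoop Ck θ ps n) / Ck :=
        div_nonneg (by linarith [hps (n + 1)]) hC.le
      have h2 : 0 < 1 / (θ * Ck) := by positivity
      linarith
    · exact ih

lemma innerLoop_mono {Ck θ : ℝ} {ps : ℕ → ℝ} (hC : 0 < Ck) (hθ : 0 < θ)
    (hps : ∀ j, 0 ≤ ps j) : Monotone (innerLoop Ck θ ps) := by
  apply monotone_nat_of_le_succ
  intro n
  simp only [innerLoop]
  split
  · have h1 : 0 ≤ (ps (n + 1) + innerLoop Ck θ ps n) / Ck :=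
      div_nonneg (by linarith [hps (n + 1), innerLoop_nonneg hC hθ hps n]) hC.le
    have h2 : 0 < 1 / (θ * Ck) := by positivity
    linarith
  · exact le_rfl

lemma xvec_nonneg (Ck : ℕ → ℝ) (θ : ℝ) (hC : ∀ t, 0 < Ck t) (hθ : 0 < θ) :
    ∀ t τ, 0 ≤ xvec Ck θ t τ := by
  intro t
  induction t with
  | zero => intro τ; simp [xvec]
  | succ t ih =>
    intro τ
    simp only [xvec]
    split
    · exact innerLoop_nonneg (hC (t + 1)) hθ
        (fun j => Finset.sum_nonneg fun σ _ => ih σ) _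
    · exact ih τ

lemma xvec_stable (Ck : ℕ → ℝ) (θ : ℝ) :
    ∀ t τ, τ ≤ t → xvec Ck θ t τ = xvec Ck θ τ τ := by
  intro t
  induction t with
  | zero => intro τ h; cases Nat.le_zero.mp h; rfl
  | succ t ih =>
    intro τ h
    by_cases hτ : τ = t + 1
    · subst hτ; rfl
    · have hle : τ ≤ t := by omega
      have : xvec Ck θ (t + 1) τ = xvec Ck θ t τ := by simp [xvec, hτ]
      rw [this, ih τ hle]

lemma xval_eq_innerLoop (Ck : ℕ → ℝ) (θ : ℝ) (s : ℕ) :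
    xval Ck θ (s + 1) = innerLoop (Ck (s + 1)) θ (psFun Ck θ (s + 1)) (s + 1) := by
  simp only [xval, xvec, if_pos rfl]
  rfl

lemma cover (Ck : ℕ → ℝ) (θ : ℝ) (hC : ∀ t, 0 < Ck t) (hθ : 0 < θ)
    (j t : ℕ) (hj : 1 ≤ j) (hjt : j ≤ t) :
    1 ≤ zval Ck θ j t + ∑ τ ∈ Finset.Icc j t, xval Ck θ τ := by
  obtain ⟨s, rfl⟩ : ∃ s, t = s + 1 := ⟨t - 1, by omega⟩
  have hps : ∀ m, 0 ≤ psFun Ck θ (s + 1) m := fun m =>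
    Finset.sum_nonneg fun σ _ => xvec_nonneg Ck θ hC hθ _ σ
  have hsum : ∑ τ ∈ Finset.Icc j (s + 1), xval Ck θ τ
      = psFun Ck θ (s + 1) j + xval Ck θ (s + 1) := by
    rw [← Finset.Ico_add_one_right_eq_Icc, Finset.sum_Ico_succ_top (by omega : j ≤ s + 1)]
    congr 1
    apply Finset.sum_congr rfl
    intro σ hσ
    have hσle : σ ≤ s := by
      have := Finset.mem_Ico.mp hσ; omega
    exact (xvec_stable Ck θ s σ hσle).symm
  have hmono := innerLoop_mono (hC (s + 1)) hθ hps
    (show j - 1 ≤ s + 1 by omega)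
  rw [hsum, xval_eq_innerLoop]
  by_cases hcond : algCond Ck θ (s + 1) j
  · have hz : zval Ck θ j (s + 1)
        = 1 - (psFun Ck θ (s + 1) j + innerLoop (Ck (s + 1)) θ (psFun Ck θ (s + 1)) (j - 1)) := by
      simp [zval, hcond]
    rw [hz]; linarith
  · have hz : zval Ck θ j (s + 1) = 0 := by simp [zval, hcond]
    have hge : 1 ≤ psFun Ck θ (s + 1) j
        + innerLoop (Ck (s + 1)) θ (psFun Ck θ (s + 1)) (j - 1) := by
      unfold algCond at hcond; linarith [not_lt.mp hcond]
    rw [hz]; linarith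

/-- primal feasibility of the solution produced by Alg. 1: the final values
`x_k(t)` (which equal `x_{k*_t}(t)` for `k = k*_t` and `0` otherwise) and `z_{i,j}(t)` are
nonnegative and satisfy `z_{i,j}(t) + Σ_{τ=j}^t Σ_{k=1}^M 1_{i,k}(τ) x_k(τ) ≥ 1` for every
`i ∈ {1,…,N}` and all `1 ≤ j ≤ t ≤ T`. -/
theorem stmt4 (N M T : ℕ) (hN : 1 ≤ N) (hM : 1 ≤ M) (hT : 1 ≤ T)
    (ind : ℕ → ℕ → ℕ → ℝ)
    (hind01 : ∀ i k t, ind i k t = 0 ∨ ind i k t = 1)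
    (hmono : ∀ i k k' t, k ≤ k' → ind i k t = 1 → ind i k' t = 1)
    (hcov : ∀ i t, ind i M t = 1)
    (C : ℕ → ℝ) (hC1 : 1 ≤ C 1)
    (hCmono : ∀ k k', 1 ≤ k → k ≤ k' → k' ≤ M → C k ≤ C k') :
    (∀ k t : ℕ,
      (0 : ℝ) ≤ if k = kstar ind N t then
          xval (fun τ => C (kstar ind N τ)) (thetaOf C M) t else 0) ∧
    (∀ j t : ℕ, 0 ≤ zval (fun τ => C (kstar ind N τ)) (thetaOf C M) j t) ∧
    (∀ i ∈ Finset.Icc 1 N, ∀ t ∈ Finset.Icc 1 T, ∀ j ∈ Finset.Icc 1 t,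
      1 ≤ zval (fun τ => C (kstar ind N τ)) (thetaOf C M) j t
          + ∑ τ ∈ Finset.Icc j t, ∑ k ∈ Finset.Icc 1 M,
              ind i k τ * (if k = kstar ind N τ then
                xval (fun σ => C (kstar ind N σ)) (thetaOf C M) τ else 0)) := by
  set Ck : ℕ → ℝ := fun τ => C (kstar ind N τ) with hCk
  set θ : ℝ := thetaOf C M with hθdef
  -- kstar facts
  have hMS : ∀ t, M ∈ {k : ℕ | 1 ≤ k ∧ ∀ i ∈ Finset.Icc 1 N, ind i k t = 1} :=
    fun t => ⟨hM, fun i _ => hcov i t⟩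
  have hkmem : ∀ t, 1 ≤ kstar ind N t ∧
      ∀ i ∈ Finset.Icc 1 N, ind i (kstar ind N t) t = 1 :=
    fun t => Nat.sInf_mem ⟨M, hMS t⟩
  have hkM : ∀ t, kstar ind N t ≤ M := fun t => Nat.sInf_le (hMS t)
  -- positivity of costs
  have hCk1 : ∀ t, 1 ≤ Ck t := fun t =>
    le_trans hC1 (hCmono 1 (kstar ind N t) le_rfl (hkmem t).1 (hkM t))
  have hC : ∀ t, 0 < Ck t := fun t => lt_of_lt_of_le one_pos (hCk1 t)
  -- positivity of θ
  have hCM : (1 : ℝ) ≤ C M := le_trans hC1 (hCmono 1 M le_rfl hM le_rfl)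
  have hCMpos : (0 : ℝ) < C M := lt_of_lt_of_le one_pos hCM
  have hb : (1 : ℝ) < 1 + 1 / C M := by
    have : (0 : ℝ) < 1 / C M := by positivity
    linarith
  have hfl : (1 : ℤ) ≤ ⌊C 1⌋ := by
    rw [Int.le_floor]; exact_mod_cast hC1
  have hθ : 0 < θ := by
    rw [hθdef]
    unfold thetaOf
    have h1 : (1 : ℝ) < (1 + 1 / C M) ^ ⌊C 1⌋ :=
      one_lt_zpow₀ hb (by omega)
    linarith
  refine ⟨?_, ?_, ?_⟩
  · intro k t
    split
    · exact xvec_nonneg Ck θ hC hθ t t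
    · exact le_rfl
  · intro j t
    unfold zval
    split
    · next h => unfold algCond at h; linarith
    · exact le_rfl
  · intro i hi t ht j hj
    have hinner : ∀ τ, (∑ k ∈ Finset.Icc 1 M,
        ind i k τ * (if k = kstar ind N τ then xval Ck θ τ else 0)) = xval Ck θ τ := by
      intro τ
      rw [Finset.sum_eq_single_of_mem (kstar ind N τ)
        (Finset.mem_Icc.mpr ⟨(hkmem τ).1, hkM τ⟩)]
      · simp [(hkmem τ).2 i hi]
      · intro k _ hk; simp [hk]
    rw [Finset.sum_congr rfl fun τ _ => hinner τ]
    have hjmem := Finset.mem_Icc.mp hj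
    exact cover Ck θ hC hθ j t hjmem.1 hjmem.2

end
end
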